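/- arXiv:1710.05407 — 2 statements merged into one kernel-verified Lean document; each statement's English description precedes it below -/
import Mathlib

section
/- Let G₁ ⊆ G₂ be sub-σ-algebras and X ∈ L². Suppose (U₁,V₁) are conditionally i.i.d. copies given G₁ with common conditional mean E[X|G₁], and (U₂,V₂) are conditionally i.i.d. given G₂ with conditional mean E[X|G₂], and all four variables have the same marginal law as some fixed variable. Then Cov(U₁,V₁) ≤ Cov(U₂,V₂). -/
/-!
Conditional independence and the common conditional mean `Y = E[X | G]` give
`E[UV] = E[E[U | G] E[V | G]] = E[Y²]` and `E[U] = E[V] = E[Y]`, so the covariance of the pair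
is `Var(E[X | G])`. Since `E[X | G₁] = E[E[X | G₂] | G₁]` for `G₁ ≤ G₂`, the comparison is the
Rao–Blackwell inequality `Var(E[Z | G₁]) ≤ Var(Z)`, a consequence of the law of total variance.
-/

open MeasureTheory ProbabilityTheory

namespace ProbabilityTheory

variable {Ω : Type*} {m m₀ : MeasurableSpace Ω} {μ : Measure Ω}

lemma variance_condExp_le [IsProbabilityMeasure μ] (hm : m ≤ m₀) {Z : Ω → ℝ}
    (hZ : MemLp Z 2 μ) : Var[μ[Z | m]; μ] ≤ Var[Z; μ] := by
  have hcondVar : 0 ≤ μ[Var[Z; μ | m]] :=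
    integral_nonneg_of_ae <| condExp_nonneg <| ae_of_all _ fun _ => sq_nonneg _
  linarith [integral_condVar_add_variance_condExp hm hZ]

lemma integral_eq_of_condExp_ae_eq [IsFiniteMeasure μ] (hm : m ≤ m₀) {f g : Ω → ℝ}
    (h : μ[f | m] =ᵐ[μ] μ[g | m]) : ∫ ω, f ω ∂μ = ∫ ω, g ω ∂μ := by
  rw [← integral_condExp hm, integral_congr_ae h, integral_condExp hm]

lemma integral_mul_sub_mul_integral_eq_variance_condExp [IsProbabilityMeasure μ]
    (hm : m ≤ m₀) {X U V : Ω → ℝ} (hX : MemLp X 2 μ)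
    (hUX : μ[U | m] =ᵐ[μ] μ[X | m]) (hVX : μ[V | m] =ᵐ[μ] μ[X | m])
    (hUV : μ[fun ω => U ω * V ω | m] =ᵐ[μ] fun ω => μ[U | m] ω * μ[V | m] ω) :
    (∫ ω, U ω * V ω ∂μ) - (∫ ω, U ω ∂μ) * (∫ ω, V ω ∂μ) = Var[μ[X | m]; μ] := by
  have hUVsq : μ[fun ω => U ω * V ω | m] =ᵐ[μ] μ[X | m] ^ 2 := by
    filter_upwards [hUV, hUX, hVX] with ω hUVω hUω hVω
    rw [hUVω, hUω, hVω, Pi.pow_apply, sq]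
  have hmean (W : Ω → ℝ) (hWX : μ[W | m] =ᵐ[μ] μ[X | m]) :
      ∫ ω, W ω ∂μ = ∫ ω, μ[X | m] ω ∂μ := by
    rw [integral_eq_of_condExp_ae_eq hm hWX, integral_condExp hm]
  rw [variance_eq_sub (hX.condExp one_le_two), hmean U hUX, hmean V hVX, ← sq,
    ← integral_condExp hm, integral_congr_ae hUVsq]

end ProbabilityTheory

theorem cov_mono_in_condexp_sigma_algebra_general {Ω : Type*} {F : MeasurableSpace Ω}
    (μ : Measure Ω) [IsProbabilityMeasure μ]
    (G₁ G₂ : MeasurableSpace Ω) (h12 : G₁ ≤ G₂) (h2F : G₂ ≤ F)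
    (X : Ω → ℝ) (hX : MemLp X 2 μ)
    (U₁ V₁ U₂ V₂ : Ω → ℝ)
    (hU₁X : condExp G₁ μ U₁ =ᵐ[μ] condExp G₁ μ X)
    (hV₁X : condExp G₁ μ V₁ =ᵐ[μ] condExp G₁ μ X)
    (hU₂X : condExp G₂ μ U₂ =ᵐ[μ] condExp G₂ μ X)
    (hV₂X : condExp G₂ μ V₂ =ᵐ[μ] condExp G₂ μ X)
    (hci₁ : condExp G₁ μ (fun ω => U₁ ω * V₁ ω) =ᵐ[μ]
      fun ω => condExp G₁ μ U₁ ω * condExp G₁ μ V₁ ω)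
    (hci₂ : condExp G₂ μ (fun ω => U₂ ω * V₂ ω) =ᵐ[μ]
      fun ω => condExp G₂ μ U₂ ω * condExp G₂ μ V₂ ω) :
    (∫ ω, U₁ ω * V₁ ω ∂μ) - (∫ ω, U₁ ω ∂μ) * (∫ ω, V₁ ω ∂μ) ≤
      (∫ ω, U₂ ω * V₂ ω ∂μ) - (∫ ω, U₂ ω ∂μ) * (∫ ω, V₂ ω ∂μ) := by
  have h1F : G₁ ≤ F := h12.trans h2F
  rw [integral_mul_sub_mul_integral_eq_variance_condExp h1F hX hU₁X hV₁X hci₁,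
    integral_mul_sub_mul_integral_eq_variance_condExp h2F hX hU₂X hV₂X hci₂,
    ← variance_congr (condExp_condExp_of_le h12 h2F)]
  exact variance_condExp_le h1F (hX.condExp one_le_two)

/-- Monotonicity of pairwise covariances in the conditioning σ-algebra: conditionally i.i.d.
pairs with conditional means `E[X|G₁]` resp. `E[X|G₂]`, `G₁ ⊆ G₂`, and common marginal law
satisfy `Cov(U₁,V₁) ≤ Cov(U₂,V₂)`. -/
theorem cov_mono_in_condexp_sigma_algebra {Ω : Type*} {F : MeasurableSpace Ω}
    (μ : Measure Ω) [IsProbabilityMeasure μ]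
    (G₁ G₂ : MeasurableSpace Ω) (h12 : G₁ ≤ G₂) (h2F : G₂ ≤ F)
    (X : Ω → ℝ) (hX : MemLp X 2 μ)
    (U₁ V₁ U₂ V₂ W : Ω → ℝ)
    (hU₁ : MemLp U₁ 2 μ) (hV₁ : MemLp V₁ 2 μ) (hU₂ : MemLp U₂ 2 μ) (hV₂ : MemLp V₂ 2 μ)
    (hU₁X : condExp G₁ μ U₁ =ᵐ[μ] condExp G₁ μ X)
    (hV₁X : condExp G₁ μ V₁ =ᵐ[μ] condExp G₁ μ X)
    (hU₂X : condExp G₂ μ U₂ =ᵐ[μ] condExp G₂ μ X)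
    (hV₂X : condExp G₂ μ V₂ =ᵐ[μ] condExp G₂ μ X)
    (hci₁ : condExp G₁ μ (fun ω => U₁ ω * V₁ ω) =ᵐ[μ]
      fun ω => condExp G₁ μ U₁ ω * condExp G₁ μ V₁ ω)
    (hci₂ : condExp G₂ μ (fun ω => U₂ ω * V₂ ω) =ᵐ[μ]
      fun ω => condExp G₂ μ U₂ ω * condExp G₂ μ V₂ ω)
    (hlawU₁ : @Measure.map Ω ℝ F Real.measurableSpace U₁ μ = @Measure.map Ω ℝ F Real.measurableSpace W μ)
    (hlawV₁ : @Measure.map Ω ℝ F Real.measurableSpace V₁ μ = @Measure.map Ω ℝ F Real.measurableSpace W μ)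
    (hlawU₂ : @Measure.map Ω ℝ F Real.measurableSpace U₂ μ = @Measure.map Ω ℝ F Real.measurableSpace W μ)
    (hlawV₂ : @Measure.map Ω ℝ F Real.measurableSpace V₂ μ = @Measure.map Ω ℝ F Real.measurableSpace W μ) :
    (∫ ω, U₁ ω * V₁ ω ∂μ) - (∫ ω, U₁ ω ∂μ) * (∫ ω, V₁ ω ∂μ) ≤
      (∫ ω, U₂ ω * V₂ ω ∂μ) - (∫ ω, U₂ ω ∂μ) * (∫ ω, V₂ ω ∂μ) :=
  cov_mono_in_condexp_sigma_algebra_general μ G₁ G₂ h12 h2F X hX U₁ V₁ U₂ V₂ hU₁X hV₁X hU₂X hV₂X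
    hci₁ hci₂
end

section
/- Let Y₁,…,Y_N be independent, X = f(Y₁,…,Y_N) square-integrable, and for S ⊆ {1,…,N} let g_S = E[X | (Yⱼ)_{j∈S}]. Then for the uniform random k-subset S_k of {1,…,N}, the map k ↦ E_{S_k}[E[g_{S_k}²]] is monotone nondecreasing in k. -/
/-!
Conditioning on a finer σ-algebra can only increase the second moment: by the tower property
`g_S = E[g_T | S]` for `S ⊆ T`, and conditional expectation is an `L²` contraction. So
`S ↦ E[g_S²]` is monotone for inclusion, and averages of a monotone set function over uniform
`k`-subsets are monotone in `k`: every `k`-set lies in `C(N - k, l - k)` of the `l`-sets, every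
`l`-set contains `C(l, k)` of the `k`-sets, and `C(N, l) C(l, k) = C(N, k) C(N - k, l - k)`.
-/

open MeasureTheory ProbabilityTheory Finset

namespace Finset

variable {α : Type*} [DecidableEq α] (U : Finset α) {a : Finset α → ℝ}

theorem sum_powersetCard_mul_choose_le (ha : Monotone a) {k l : ℕ} (hkl : k ≤ l) :
    (∑ S ∈ U.powersetCard k, a S) * (#U - k).choose (l - k) ≤
      (∑ T ∈ U.powersetCard l, a T) * l.choose k := by
  calc (∑ S ∈ U.powersetCard k, a S) * (#U - k).choose (l - k)
      = ∑ S ∈ U.powersetCard k, ∑ _T ∈ (U.powersetCard l).filter (S ⊆ ·), a S := by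
        rw [sum_mul]
        refine sum_congr rfl fun S hS => ?_
        obtain ⟨hSU, hSk⟩ := mem_powersetCard.1 hS
        rw [sum_const, card_filter_powersetCard_subset S U l hSU (hSk ▸ hkl), hSk,
          nsmul_eq_mul, mul_comm]
    _ ≤ ∑ S ∈ U.powersetCard k, ∑ T ∈ (U.powersetCard l).filter (S ⊆ ·), a T :=
        sum_le_sum fun S _ => sum_le_sum fun T hT => ha (mem_filter.1 hT).2
    _ = ∑ T ∈ U.powersetCard l, ∑ _S ∈ T.powersetCard k, a T :=
        sum_comm' fun S T => by
          simp only [mem_filter, mem_powersetCard]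
          constructor
          · rintro ⟨⟨-, hSk⟩, ⟨hTU, hTl⟩, hST⟩
            exact ⟨⟨hST, hSk⟩, hTU, hTl⟩
          · rintro ⟨⟨hST, hSk⟩, hTU, hTl⟩
            exact ⟨⟨hST.trans hTU, hSk⟩, ⟨hTU, hTl⟩, hST⟩
    _ = (∑ T ∈ U.powersetCard l, a T) * l.choose k := by
        rw [sum_mul]
        refine sum_congr rfl fun T hT => ?_
        rw [sum_const, card_powersetCard, (mem_powersetCard.1 hT).2, nsmul_eq_mul, mul_comm]

theorem sum_powersetCard_div_choose_mono (ha : Monotone a) {k l : ℕ} (hkl : k ≤ l)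
    (hl : l ≤ #U) :
    (∑ S ∈ U.powersetCard k, a S) / (#U).choose k ≤
      (∑ T ∈ U.powersetCard l, a T) / (#U).choose l := by
  have hsup : (0 : ℝ) < (#U - k).choose (l - k) := by
    exact_mod_cast Nat.choose_pos (by omega)
  have hsub : (0 : ℝ) < l.choose k := by exact_mod_cast Nat.choose_pos hkl
  have hchoose : ((#U).choose k : ℝ) * (#U - k).choose (l - k) = (#U).choose l * l.choose k := by
    exact_mod_cast (Nat.choose_mul hkl).symm
  calc (∑ S ∈ U.powersetCard k, a S) / (#U).choose k
      = (∑ S ∈ U.powersetCard k, a S) * (#U - k).choose (l - k) /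
          ((#U).choose l * l.choose k) := by
        rw [← hchoose, mul_div_mul_right _ _ hsup.ne']
    _ ≤ (∑ T ∈ U.powersetCard l, a T) * l.choose k / ((#U).choose l * l.choose k) :=
        div_le_div_of_nonneg_right (sum_powersetCard_mul_choose_le U ha hkl) (by positivity)
    _ = (∑ T ∈ U.powersetCard l, a T) / (#U).choose l :=
        mul_div_mul_right _ _ hsub.ne'

end Finset

namespace MeasureTheory

variable {α : Type*} {m₀ : MeasurableSpace α} {μ : Measure α}

theorem sq_lpNorm_two_eq_integral_sq {g : α → ℝ} (hg : AEStronglyMeasurable g μ) :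
    lpNorm g 2 μ ^ 2 = ∫ x, g x ^ 2 ∂μ := by
  have hnonneg : 0 ≤ ∫ x, g x ^ 2 ∂μ := integral_nonneg fun x => sq_nonneg (g x)
  rw [lpNorm_eq_integral_norm_rpow_toReal two_ne_zero ENNReal.ofNat_ne_top hg]
  simp only [ENNReal.toReal_ofNat, Real.rpow_two, Real.norm_eq_abs, sq_abs]
  rw [← Real.rpow_natCast, ← Real.rpow_mul hnonneg]
  norm_num

theorem integral_sq_condExp_le {m : MeasurableSpace α} {g : α → ℝ} (hg : MemLp g 2 μ) :
    ∫ x, (μ[g | m]) x ^ 2 ∂μ ≤ ∫ x, g x ^ 2 ∂μ := by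
  rw [← sq_lpNorm_two_eq_integral_sq hg.1,
    ← sq_lpNorm_two_eq_integral_sq integrable_condExp.aestronglyMeasurable]
  exact pow_le_pow_left₀ lpNorm_nonneg (hg.lpNorm_condExp_le_lpNorm one_le_two) 2

theorem integral_sq_condExp_mono {m₁ m₂ : MeasurableSpace α} (h₁₂ : m₁ ≤ m₂) (h₂ : m₂ ≤ m₀)
    [SigmaFinite (μ.trim h₂)] {X : α → ℝ} (hX : MemLp X 2 μ) :
    ∫ x, (μ[X | m₁]) x ^ 2 ∂μ ≤ ∫ x, (μ[X | m₂]) x ^ 2 ∂μ := by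
  calc ∫ x, (μ[X | m₁]) x ^ 2 ∂μ = ∫ x, (μ[μ[X | m₂] | m₁]) x ^ 2 ∂μ :=
        integral_congr_ae <| (condExp_condExp_of_le h₁₂ h₂).symm.fun_comp (· ^ 2)
    _ ≤ ∫ x, (μ[X | m₂]) x ^ 2 ∂μ := integral_sq_condExp_le (hX.condExp one_le_two)

end MeasureTheory

theorem avg_sq_condexp_monotone_general {Ω : Type*} {F : MeasurableSpace Ω}
    (μ : Measure Ω) [IsProbabilityMeasure μ] (N : ℕ)
    (Y : Fin N → Ω → ℝ) (hYm : ∀ j, Measurable (Y j))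
    (X : Ω → ℝ) (hX : MemLp X 2 μ) :
    ∀ k l : ℕ, k ≤ l → l ≤ N →
      (∑ S ∈ Finset.powersetCard k (Finset.univ : Finset (Fin N)),
          ∫ ω, (condExp (⨆ j ∈ S, MeasurableSpace.comap (Y j) inferInstance) μ X ω) ^ 2 ∂μ) /
          (N.choose k : ℝ) ≤
        (∑ S ∈ Finset.powersetCard l (Finset.univ : Finset (Fin N)),
          ∫ ω, (condExp (⨆ j ∈ S, MeasurableSpace.comap (Y j) inferInstance) μ X ω) ^ 2 ∂μ) /
          (N.choose l : ℝ) := by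
  intro k l hkl hlN
  have hle : ∀ S : Finset (Fin N), (⨆ j ∈ S, MeasurableSpace.comap (Y j) inferInstance) ≤ F :=
    fun S => iSup₂_le fun j _ => (hYm j).comap_le
  have hmono : Monotone fun S : Finset (Fin N) =>
      ∫ ω, (condExp (⨆ j ∈ S, MeasurableSpace.comap (Y j) inferInstance) μ X ω) ^ 2 ∂μ :=
    fun S T hST => integral_sq_condExp_mono (biSup_mono fun j hj => hST hj) (hle T) hX
  simpa using sum_powersetCard_div_choose_mono univ hmono hkl (by simpa using hlN)

/-- For independent `Y₁,…,Y_N`, `X = f(Y₁,…,Y_N)` square-integrable and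
`g_S = E[X | (Yⱼ)_{j∈S}]`, the average of `E[g_{S}²]` over uniformly chosen `k`-subsets `S`
is monotone nondecreasing in `k`. -/
theorem avg_sq_condexp_monotone {Ω : Type*} {F : MeasurableSpace Ω}
    (μ : Measure Ω) [IsProbabilityMeasure μ] (N : ℕ)
    (Y : Fin N → Ω → ℝ) (hYm : ∀ j, Measurable (Y j))
    (hindep : iIndepFun Y μ)
    (f : (Fin N → ℝ) → ℝ) (hf : Measurable f)
    (X : Ω → ℝ) (hXf : X = fun ω => f (fun j => Y j ω)) (hX : MemLp X 2 μ) :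
    ∀ k l : ℕ, k ≤ l → l ≤ N →
      (∑ S ∈ Finset.powersetCard k (Finset.univ : Finset (Fin N)),
          ∫ ω, (condExp (⨆ j ∈ S, MeasurableSpace.comap (Y j) inferInstance) μ X ω) ^ 2 ∂μ) /
          (N.choose k : ℝ) ≤
        (∑ S ∈ Finset.powersetCard l (Finset.univ : Finset (Fin N)),
          ∫ ω, (condExp (⨆ j ∈ S, MeasurableSpace.comap (Y j) inferInstance) μ X ω) ^ 2 ∂μ) /
          (N.choose l : ℝ) :=
  avg_sq_condexp_monotone_general (F := F) μ N Y hYm X hX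
end
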